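/- Let f(x,y) > 0 be symmetric, increasing and convex in each variable, and let G be a graph with the largest f-spectral radius among all connected graphs of order n and cyclomatic number c ≥ 0. Then G contains no induced path on 5 vertices P₅. -/

import Mathlib

set_option linter.unusedSectionVars false
set_option maxHeartbeats 1000000

open scoped Classical

/-- Spectral radius of a real square matrix: the largest modulus of a complex eigenvalue. -/
noncomputable def specRad {n : Type*} [Fintype n] [DecidableEq n] (A : Matrix n n ℝ) : ℝ :=
  sSup {r : ℝ | ∃ μ : ℂ, (A.map (Complex.ofReal ·)).charpoly.IsRoot μ ∧ r = ‖μ‖}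

/-- The degree-based weighted (`f`-)adjacency matrix of a graph. -/
noncomputable def fAdj {V : Type*} [Fintype V] [DecidableEq V] (G : SimpleGraph V)
    (f : ℝ → ℝ → ℝ) : Matrix V V ℝ :=
  fun i j => if G.Adj i j then f (G.degree i) (G.degree j) else 0

open Finset Matrix



noncomputable section SpecAux

variable {V : Type*} [Fintype V] [DecidableEq V]

/-- quadratic form -/
def qf (A : Matrix V V ℝ) (x : V → ℝ) : ℝ := ∑ i, ∑ j, A i j * x i * x j

lemma qf_eq_mulVec (A : Matrix V V ℝ) (x : V → ℝ) :
    qf A x = ∑ i, (A *ᵥ x) i * x i := by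
  unfold qf Matrix.mulVec dotProduct
  refine Finset.sum_congr rfl fun i _ => ?_
  rw [Finset.sum_mul]
  exact Finset.sum_congr rfl fun j _ => by ring

lemma isRoot_charpoly_iff {K : Type*} [Field K] (M : Matrix V V K) (μ : K) :
    M.charpoly.IsRoot μ ↔ ∃ v : V → K, v ≠ 0 ∧ M *ᵥ v = μ • v := by
  have heval : M.charpoly.eval μ = (Matrix.diagonal (fun _ : V => μ) - M).det := by
    rw [Matrix.charpoly, ← Polynomial.coe_evalRingHom, RingHom.map_det]
    congr 1
    ext i j
    by_cases h : i = j
    · subst h; simp [Matrix.charmatrix_apply_eq]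
    · simp [Matrix.charmatrix_apply_ne _ _ _ h, Matrix.diagonal_apply_ne _ h]
  constructor
  · intro hr
    have hdet : (Matrix.diagonal (fun _ : V => μ) - M).det = 0 := by
      rw [← heval]; exact hr
    obtain ⟨v, hv0, hv⟩ := Matrix.exists_mulVec_eq_zero_iff.mpr hdet
    refine ⟨v, hv0, ?_⟩
    have := hv
    rw [Matrix.sub_mulVec] at this
    have hdiag : Matrix.diagonal (fun _ : V => μ) *ᵥ v = μ • v := by
      ext i; simp [Matrix.mulVec_diagonal]
    rw [hdiag] at this
    ext i
    have := congrFun this i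
    simp only [Pi.sub_apply, Pi.zero_apply, sub_eq_zero] at this
    exact this.symm
  · rintro ⟨v, hv0, hv⟩
    have hdet : (Matrix.diagonal (fun _ : V => μ) - M).det = 0 := by
      rw [← Matrix.exists_mulVec_eq_zero_iff]
      refine ⟨v, hv0, ?_⟩
      rw [Matrix.sub_mulVec]
      have hdiag : Matrix.diagonal (fun _ : V => μ) *ᵥ v = μ • v := by
        ext i; simp [Matrix.mulVec_diagonal]
      rw [hdiag, hv, sub_self]
    unfold Polynomial.IsRoot
    rw [heval, hdet]

/-- real eigenvalue gives lower bound on specRad -/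
lemma le_specRad_of_eigen {A : Matrix V V ℝ} {lam : ℝ} {x : V → ℝ}
    (hx0 : x ≠ 0) (hx : A *ᵥ x = lam • x) :
    lam ≤ sSup {r : ℝ | ∃ μ : ℂ, (A.map (Complex.ofReal ·)).charpoly.IsRoot μ ∧ r = ‖μ‖} := by
  have hne : (Nonempty V) := by
    by_contra h
    rw [not_nonempty_iff] at h
    exact hx0 (funext fun i => absurd (Nonempty.intro i) (by simpa using h))
  -- root
  have hroot : (A.map (Complex.ofReal ·)).charpoly.IsRoot ((lam : ℂ)) := by
    rw [isRoot_charpoly_iff]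
    refine ⟨fun i => (x i : ℂ), ?_, ?_⟩
    · intro h
      apply hx0
      ext i
      have := congrFun h i
      simpa using this
    · ext i
      have := congrFun hx i
      simp only [Matrix.mulVec, dotProduct, Matrix.map_apply, Pi.smul_apply,
        smul_eq_mul] at this ⊢
      push_cast
      exact_mod_cast this
  have hb : BddAbove {r : ℝ | ∃ μ : ℂ, (A.map (Complex.ofReal ·)).charpoly.IsRoot μ ∧ r = ‖μ‖} := by
    have hmon := (A.map (Complex.ofReal ·)).charpoly_monic
    have hne0 : (A.map (Complex.ofReal ·)).charpoly ≠ 0 := hmon.ne_zero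
    apply Set.Finite.bddAbove
    have : {r : ℝ | ∃ μ : ℂ, (A.map (Complex.ofReal ·)).charpoly.IsRoot μ ∧ r = ‖μ‖}
        ⊆ (fun μ : ℂ => ‖μ‖) '' ((A.map (Complex.ofReal ·)).charpoly.roots.toFinset : Set ℂ) := by
      rintro r ⟨μ, hμ, rfl⟩
      exact ⟨μ, Multiset.mem_toFinset.mpr (Polynomial.mem_roots'.mpr ⟨hne0, hμ⟩), rfl⟩
    exact Set.Finite.subset (Set.Finite.image _ (Set.finite_coe_iff.mp (by
      exact Set.Finite.to_subtype (Set.finite_mem_finset _)))) this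
  calc lam ≤ |lam| := le_abs_self lam
    _ ≤ _ := by
        apply le_csSup hb
        exact ⟨(lam : ℂ), hroot, by simp [Complex.norm_real]⟩

section Euclid

variable [Nonempty V]

lemma reApply_eq_qf (B : Matrix V V ℝ) (z : EuclideanSpace ℝ V) :
    (Matrix.toEuclideanCLM (𝕜 := ℝ) B).reApplyInnerSelf z
      = qf B ((WithLp.equiv 2 (V → ℝ)) z) := by
  rw [ContinuousLinearMap.reApplyInnerSelf_apply, qf_eq_mulVec]
  have hz : ((WithLp.equiv 2 (V → ℝ)) ((Matrix.toEuclideanCLM (𝕜 := ℝ) B) z))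
      = B *ᵥ ((WithLp.equiv 2 (V → ℝ)) z) := by
    exact Matrix.ofLp_toEuclideanCLM _ _
  rw [PiLp.inner_apply]
  simp only [RCLike.inner_apply, starRingEnd_apply, star_trivial, RCLike.re_to_real]
  refine Finset.sum_congr rfl fun i _ => ?_
  rw [← congrFun hz i]
  exact mul_comm _ _

lemma norm_euclid (z : EuclideanSpace ℝ V) :
    ‖z‖ = Real.sqrt (∑ i, ((WithLp.equiv 2 (V → ℝ)) z i) ^ 2) := by
  rw [EuclideanSpace.norm_eq]
  congr 1
  exact Finset.sum_congr rfl fun i _ => by rw [Real.norm_eq_abs, sq_abs]; rfl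

lemma norm_one_iff (z : EuclideanSpace ℝ V) :
    ‖z‖ = 1 ↔ ∑ i, ((WithLp.equiv 2 (V → ℝ)) z i) ^ 2 = 1 := by
  rw [norm_euclid]
  constructor
  · intro h
    have h2 : 0 ≤ ∑ i, ((WithLp.equiv 2 (V → ℝ)) z i) ^ 2 :=
      Finset.sum_nonneg fun i _ => sq_nonneg _
    nlinarith [Real.sq_sqrt h2]
  · intro h; rw [h, Real.sqrt_one]

lemma eigen_of_max (B : Matrix V V ℝ) (hsym : ∀ i j, B i j = B j i)
    (x : V → ℝ) (hunit : ∑ i, x i ^ 2 = 1)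
    (hmax : ∀ y : V → ℝ, ∑ i, y i ^ 2 = 1 → qf B y ≤ qf B x) :
    B *ᵥ x = qf B x • x := by
  classical
  set T := Matrix.toEuclideanCLM (𝕜 := ℝ) (n := V) B with hTdef
  have hsa : IsSelfAdjoint T := by
    have hB : IsSelfAdjoint B := by
      rw [_root_.IsSelfAdjoint, Matrix.star_eq_conjTranspose]
      ext i j
      rw [Matrix.conjTranspose_apply]
      simpa using hsym j i
    exact hB.map (Matrix.toEuclideanCLM (𝕜 := ℝ) (n := V))
  set x' : EuclideanSpace ℝ V := (WithLp.equiv 2 (V → ℝ)).symm x with hx'def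
  have hex : (WithLp.equiv 2 (V → ℝ)) x' = x := rfl
  have hnx' : ‖x'‖ = 1 := by rw [norm_one_iff, hex]; exact hunit
  have hx'ne : x' ≠ 0 := by
    intro h; rw [h] at hnx'; simp at hnx'
  have hmaxon : IsMaxOn T.reApplyInnerSelf (Metric.sphere (0 : EuclideanSpace ℝ V) ‖x'‖) x' := by
    intro z hz
    have hz1 : ‖z‖ = 1 := by
      rw [Metric.mem_sphere, dist_zero_right] at hz; rw [hz, hnx']
    have := hmax _ ((norm_one_iff z).mp hz1)
    simp only [Set.mem_setOf_eq]
    rw [reApply_eq_qf, reApply_eq_qf, hex]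
    exact this
  have hev := hsa.hasEigenvector_of_isMaxOn hx'ne hmaxon
  have happ := hev.apply_eq_smul
  set c : ℝ := (⨆ z : { z : EuclideanSpace ℝ V // z ≠ 0 }, T.rayleighQuotient z) with hcdef
  have happ' : T x' = c • x' := happ
  have hinner : qf B x = c := by
    have h1 : T.reApplyInnerSelf x' = qf B x := by rw [reApply_eq_qf, hex]
    have h2 : T.reApplyInnerSelf x' = c := by
      rw [ContinuousLinearMap.reApplyInnerSelf_apply, happ']
      rw [real_inner_smul_left, real_inner_self_eq_norm_sq, hnx']
      norm_num
    rw [← h1, h2]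
  have hfin : (WithLp.equiv 2 (V → ℝ)) (T x') = B *ᵥ x := by
    exact Matrix.ofLp_toEuclideanCLM _ _
  rw [happ'] at hfin
  rw [hinner]
  rw [← hfin]
  rfl

lemma exists_max_eigen (A : Matrix V V ℝ) (hsym : ∀ i j, A i j = A j i)
    (hnn : ∀ i j, 0 ≤ A i j) :
    ∃ x : V → ℝ, (∀ i, 0 ≤ x i) ∧ (∑ i, x i ^ 2 = 1) ∧
      (∀ y : V → ℝ, ∑ i, y i ^ 2 = 1 → qf A y ≤ qf A x) ∧ A *ᵥ x = qf A x • x := by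
  classical
  set T := Matrix.toEuclideanCLM (𝕜 := ℝ) (n := V) A with hTdef
  have h1 : (Metric.sphere (0 : EuclideanSpace ℝ V) 1).Nonempty :=
    NormedSpace.sphere_nonempty.mpr zero_le_one
  obtain ⟨x₀, hx₀mem, hx₀max⟩ := (isCompact_sphere (0 : EuclideanSpace ℝ V) 1).exists_isMaxOn h1
    T.reApplyInnerSelf_continuous.continuousOn
  have hx₀1 : ‖x₀‖ = 1 := by rwa [Metric.mem_sphere, dist_zero_right] at hx₀mem
  set x₀' : V → ℝ := (WithLp.equiv 2 (V → ℝ)) x₀ with hx₀'def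
  have hx₀unit : ∑ i, x₀' i ^ 2 = 1 := (norm_one_iff x₀).mp hx₀1
  set m : V → ℝ := fun i => |x₀' i| with hmdef
  have hmunit : ∑ i, m i ^ 2 = 1 := by
    rw [← hx₀unit]; exact Finset.sum_congr rfl fun i _ => by rw [hmdef, sq_abs]
  have hstep : qf A x₀' ≤ qf A m := by
    unfold qf
    refine Finset.sum_le_sum fun i _ => Finset.sum_le_sum fun j _ => ?_
    have : x₀' i * x₀' j ≤ |x₀' i| * |x₀' j| := by
      calc x₀' i * x₀' j ≤ |x₀' i * x₀' j| := le_abs_self _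
        _ = |x₀' i| * |x₀' j| := abs_mul _ _
    calc A i j * x₀' i * x₀' j = A i j * (x₀' i * x₀' j) := by ring
      _ ≤ A i j * (|x₀' i| * |x₀' j|) := mul_le_mul_of_nonneg_left this (hnn i j)
      _ = A i j * m i * m j := by rw [hmdef]; ring
  have hmax : ∀ y : V → ℝ, ∑ i, y i ^ 2 = 1 → qf A y ≤ qf A m := by
    intro y hy
    have hymem : (WithLp.equiv 2 (V → ℝ)).symm y ∈ Metric.sphere (0 : EuclideanSpace ℝ V) 1 := by
      rw [Metric.mem_sphere, dist_zero_right, norm_one_iff]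
      exact hy
    have := hx₀max hymem
    simp only [Set.mem_setOf_eq] at this
    rw [reApply_eq_qf, reApply_eq_qf] at this
    calc qf A y = qf A ((WithLp.equiv 2 (V → ℝ)) ((WithLp.equiv 2 (V → ℝ)).symm y)) := rfl
      _ ≤ qf A ((WithLp.equiv 2 (V → ℝ)) x₀) := this
      _ = qf A x₀' := rfl
      _ ≤ qf A m := hstep
  exact ⟨m, fun i => abs_nonneg _, hmunit, hmax, eigen_of_max A hsym m hmunit hmax⟩

end Euclid

lemma specRad_le_of_max {A : Matrix V V ℝ} (hnn : ∀ i j, 0 ≤ A i j) {lam : ℝ}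
    (hlam0 : 0 ≤ lam)
    (hb : ∀ y : V → ℝ, ∑ i, y i ^ 2 = 1 → qf A y ≤ lam) :
    sSup {r : ℝ | ∃ μ : ℂ, (A.map (Complex.ofReal ·)).charpoly.IsRoot μ ∧ r = ‖μ‖}
      ≤ lam := by
  apply Real.sSup_le _ hlam0
  rintro r ⟨μ, hroot, rfl⟩
  obtain ⟨v, hv0, hv⟩ := (isRoot_charpoly_iff _ μ).mp hroot
  set m : V → ℝ := fun i => ‖v i‖ with hmdef
  set s2 : ℝ := ∑ i, m i ^ 2 with hs2def
  have hm0 : ∀ i, 0 ≤ m i := fun i => norm_nonneg _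
  have hs2pos : 0 < s2 := by
    obtain ⟨i0, hi0⟩ : ∃ i, v i ≠ 0 := by
      by_contra h
      push_neg at h
      exact hv0 (funext fun i => h i)
    apply Finset.sum_pos' (fun i _ => sq_nonneg _) ⟨i0, Finset.mem_univ _, ?_⟩
    have : 0 < m i0 := by
      rw [hmdef]; exact norm_pos_iff.mpr hi0
    positivity
  -- key identity
  have hkey : μ * (s2 : ℂ) = ∑ i, ∑ j, (A i j : ℂ) * (starRingEnd ℂ) (v i) * v j := by
    have heig : ∀ i, ∑ j, (A i j : ℂ) * v j = μ * v i := by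
      intro i
      have := congrFun hv i
      simpa [Matrix.mulVec, dotProduct, Matrix.map_apply] using this
    calc μ * (s2 : ℂ) = ∑ i, (starRingEnd ℂ) (v i) * (μ * v i) := by
          rw [hs2def]
          push_cast
          rw [Finset.mul_sum]
          refine Finset.sum_congr rfl fun i _ => ?_
          rw [hmdef]
          have h2 : ((‖v i‖ : ℝ) : ℂ) ^ 2 = ((Complex.normSq (v i) : ℝ) : ℂ) := by
            norm_cast
            exact (Complex.sq_norm (v i))
          rw [h2, Complex.normSq_eq_conj_mul_self]
          ring
      _ = ∑ i, (starRingEnd ℂ) (v i) * (∑ j, (A i j : ℂ) * v j) := by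
          refine Finset.sum_congr rfl fun i _ => by rw [heig]
      _ = ∑ i, ∑ j, (A i j : ℂ) * (starRingEnd ℂ) (v i) * v j := by
          refine Finset.sum_congr rfl fun i _ => ?_
          rw [Finset.mul_sum]
          refine Finset.sum_congr rfl fun j _ => by ring
  have habs : ‖μ‖ * s2 ≤ qf A m := by
    have h1 : ‖μ * (s2 : ℂ)‖ = ‖μ‖ * s2 := by
      rw [norm_mul, Complex.norm_real, Real.norm_eq_abs, abs_of_nonneg (le_of_lt hs2pos)]
    rw [← h1, hkey]
    calc ‖∑ i, ∑ j, (A i j : ℂ) * (starRingEnd ℂ) (v i) * v j‖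
        ≤ ∑ i, ‖∑ j, (A i j : ℂ) * (starRingEnd ℂ) (v i) * v j‖ :=
          norm_sum_le _ _
      _ ≤ ∑ i, ∑ j, ‖(A i j : ℂ) * (starRingEnd ℂ) (v i) * v j‖ :=
          Finset.sum_le_sum fun i _ => norm_sum_le _ _
      _ = qf A m := by
          unfold qf
          refine Finset.sum_congr rfl fun i _ => Finset.sum_congr rfl fun j _ => ?_
          rw [norm_mul, norm_mul, Complex.norm_real, Complex.norm_conj]
          rw [Real.norm_eq_abs, abs_of_nonneg (hnn i j), hmdef]
  -- scale m to unit
  set c : ℝ := Real.sqrt s2 with hcdef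
  have hc : c ^ 2 = s2 := Real.sq_sqrt (le_of_lt hs2pos)
  have hcpos : 0 < c := Real.sqrt_pos.mpr hs2pos
  set y : V → ℝ := fun i => m i / c with hydef
  have hyunit : ∑ i, y i ^ 2 = 1 := by
    rw [hydef]
    have : ∀ i, (m i / c) ^ 2 = m i ^ 2 / c ^ 2 := fun i => div_pow _ _ _
    simp only [this, hc]
    rw [← Finset.sum_div, ← hs2def, div_self (ne_of_gt hs2pos)]
  have hqm : qf A m = s2 * qf A y := by
    unfold qf
    rw [Finset.mul_sum]
    refine Finset.sum_congr rfl fun i _ => ?_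
    rw [Finset.mul_sum]
    refine Finset.sum_congr rfl fun j _ => ?_
    rw [hydef]
    field_simp
    rw [← hc]
  have := hb y hyunit
  nlinarith [habs, hqm, hs2pos]

end SpecAux



noncomputable section GraphAux

variable {V : Type*} [Fintype V] [DecidableEq V]

/-- Kelmans operation: move all neighbors of `v` (except common ones) to `u`. -/
def kel (G : SimpleGraph V) (u v : V) : SimpleGraph V where
  Adj a b :=
    (a ≠ u ∧ a ≠ v ∧ b ≠ u ∧ b ≠ v ∧ G.Adj a b) ∨
    (a = u ∧ b ≠ u ∧ b ≠ v ∧ (G.Adj u b ∨ G.Adj v b)) ∨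
    (b = u ∧ a ≠ u ∧ a ≠ v ∧ (G.Adj u a ∨ G.Adj v a)) ∨
    (a = v ∧ b ≠ u ∧ b ≠ v ∧ G.Adj u b ∧ G.Adj v b) ∨
    (b = v ∧ a ≠ u ∧ a ≠ v ∧ G.Adj u a ∧ G.Adj v a)
  symm := by
    constructor
    rintro a b (⟨h1, h2, h3, h4, h5⟩ | ⟨h1, h2, h3, h4⟩ | ⟨h1, h2, h3, h4⟩ |
      ⟨h1, h2, h3, h4⟩ | ⟨h1, h2, h3, h4⟩)
    · exact Or.inl ⟨h3, h4, h1, h2, h5.symm⟩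
    · exact Or.inr (Or.inr (Or.inl ⟨h1, h2, h3, h4⟩))
    · exact Or.inr (Or.inl ⟨h1, h2, h3, h4⟩)
    · exact Or.inr (Or.inr (Or.inr (Or.inr ⟨h1, h2, h3, h4⟩)))
    · exact Or.inr (Or.inr (Or.inr (Or.inl ⟨h1, h2, h3, h4⟩)))
  loopless := by
    constructor
    intro a h
    rcases h with ⟨_, _, _, _, h⟩ | ⟨h1, h2, _⟩ | ⟨h1, h2, _⟩ | ⟨h1, _, h2, _⟩ | ⟨h1, _, h2, _⟩
    · exact G.loopless.irrefl a h
    · exact h2 h1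
    · exact h2 h1
    · exact h2 h1
    · exact h2 h1

variable {G : SimpleGraph V} {u v : V}

lemma kel_adj {a b : V} : (kel G u v).Adj a b ↔
    ((a ≠ u ∧ a ≠ v ∧ b ≠ u ∧ b ≠ v ∧ G.Adj a b) ∨
    (a = u ∧ b ≠ u ∧ b ≠ v ∧ (G.Adj u b ∨ G.Adj v b)) ∨
    (b = u ∧ a ≠ u ∧ a ≠ v ∧ (G.Adj u a ∨ G.Adj v a)) ∨
    (a = v ∧ b ≠ u ∧ b ≠ v ∧ G.Adj u b ∧ G.Adj v b) ∨
    (b = v ∧ a ≠ u ∧ a ≠ v ∧ G.Adj u a ∧ G.Adj v a)) := Iff.rfl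

lemma kel_adj_other {a b : V} (ha : a ≠ u) (ha' : a ≠ v) (hb : b ≠ u) (hb' : b ≠ v) :
    (kel G u v).Adj a b ↔ G.Adj a b := by
  rw [kel_adj]
  constructor
  · rintro (⟨_, _, _, _, h⟩ | h | h | h | h) <;> tauto
  · intro h
    exact Or.inl ⟨ha, ha', hb, hb', h⟩

lemma kel_adj_u {b : V} (huv : u ≠ v) (hb : b ≠ u) (hb' : b ≠ v) :
    (kel G u v).Adj u b ↔ (G.Adj u b ∨ G.Adj v b) := by
  rw [kel_adj]
  constructor
  · rintro (⟨h, _⟩ | ⟨_, _, _, h⟩ | ⟨h, _⟩ | ⟨h, _⟩ | ⟨_, h, _⟩) <;> tauto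
  · intro h
    exact Or.inr (Or.inl ⟨rfl, hb, hb', h⟩)

lemma kel_adj_v {b : V} (huv : u ≠ v) (hb : b ≠ u) (hb' : b ≠ v) :
    (kel G u v).Adj v b ↔ (G.Adj u b ∧ G.Adj v b) := by
  rw [kel_adj]
  constructor
  · rintro (⟨h, _⟩ | ⟨h, _⟩ | ⟨h, h', _⟩ | ⟨_, _, _, h⟩ | ⟨_, h, _⟩) <;> tauto
  · intro h
    exact Or.inr (Or.inr (Or.inr (Or.inl ⟨rfl, hb, hb', h⟩)))

lemma kel_not_adj_uv (huv : u ≠ v) : ¬ (kel G u v).Adj u v := by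
  rw [kel_adj]
  rintro (⟨h, _⟩ | ⟨_, _, h, _⟩ | ⟨h, _⟩ | ⟨h, _⟩ | ⟨_, h, _⟩) <;> tauto

lemma sum_split {M : Type*} [AddCommMonoid M] (u v : V) (huv : u ≠ v) (g : V → M) :
    ∑ z, g z = g u + g v + ∑ z ∈ (univ.erase u).erase v, g z := by
  have hv : v ∈ univ.erase u := Finset.mem_erase.mpr ⟨huv.symm, Finset.mem_univ v⟩
  calc ∑ z, g z = g u + ∑ z ∈ univ.erase u, g z :=
        (Finset.add_sum_erase _ g (Finset.mem_univ u)).symm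
    _ = g u + (g v + ∑ z ∈ (univ.erase u).erase v, g z) := by
        rw [Finset.add_sum_erase _ g hv]
    _ = g u + g v + ∑ z ∈ (univ.erase u).erase v, g z := (add_assoc _ _ _).symm

lemma mem_SS {w : V} (hw : w ∈ (univ.erase u).erase v) : w ≠ u ∧ w ≠ v := by
  rw [Finset.mem_erase, Finset.mem_erase] at hw
  exact ⟨hw.2.1, hw.1⟩

lemma degree_eq_sum (G : SimpleGraph V) (w : V) :
    G.degree w = ∑ z, (if G.Adj w z then 1 else 0) := by
  rw [← SimpleGraph.card_neighborFinset_eq_degree, SimpleGraph.neighborFinset_eq_filter,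
    Finset.card_filter]

/-- number of common neighbors -/
def commCard (G : SimpleGraph V) (u v : V) : ℕ :=
  (univ.filter (fun z => G.Adj u z ∧ G.Adj v z)).card

lemma commCard_eq_sum : commCard G u v = ∑ z, (if G.Adj u z ∧ G.Adj v z then 1 else 0) :=
  Finset.card_filter _ _

lemma commCard_le_degv : commCard G u v ≤ G.degree v := by
  rw [← SimpleGraph.card_neighborFinset_eq_degree, SimpleGraph.neighborFinset_eq_filter]
  apply Finset.card_le_card
  intro z hz
  rw [Finset.mem_filter] at hz ⊢
  exact ⟨hz.1, hz.2.2⟩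

lemma commCard_le_degu : commCard G u v ≤ G.degree u := by
  rw [← SimpleGraph.card_neighborFinset_eq_degree, SimpleGraph.neighborFinset_eq_filter]
  apply Finset.card_le_card
  intro z hz
  rw [Finset.mem_filter] at hz ⊢
  exact ⟨hz.1, hz.2.1⟩

variable (huv : u ≠ v) (hnadj : ¬ G.Adj u v)

include huv hnadj in
lemma deg_kel_other {w : V} (hw : w ≠ u) (hw' : w ≠ v) :
    (kel G u v).degree w = G.degree w := by
  rw [degree_eq_sum, degree_eq_sum, sum_split u v huv, sum_split u v huv]
  have hS : ∀ z ∈ (univ.erase u).erase v,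
      (if (kel G u v).Adj w z then 1 else 0) = (if G.Adj w z then 1 else 0) := by
    intro z hz
    obtain ⟨hz1, hz2⟩ := mem_SS hz
    rw [if_congr (kel_adj_other hw hw' hz1 hz2) rfl rfl]
  rw [Finset.sum_congr rfl hS]
  have h1 : (kel G u v).Adj w u ↔ (G.Adj u w ∨ G.Adj v w) := by
    rw [SimpleGraph.adj_comm]
    exact kel_adj_u huv hw hw'
  have h2 : (kel G u v).Adj w v ↔ (G.Adj u w ∧ G.Adj v w) := by
    rw [SimpleGraph.adj_comm]
    exact kel_adj_v huv hw hw'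
  have h3 : G.Adj w u ↔ G.Adj u w := SimpleGraph.adj_comm _ _ _
  have h4 : G.Adj w v ↔ G.Adj v w := SimpleGraph.adj_comm _ _ _
  by_cases hu' : G.Adj u w <;> by_cases hv' : G.Adj v w <;>
    simp [h1, h2, h3, h4, hu', hv']

include huv hnadj in
lemma deg_kel_v : (kel G u v).degree v = commCard G u v := by
  rw [degree_eq_sum, commCard_eq_sum, sum_split u v huv, sum_split u v huv]
  have hS : ∀ z ∈ (univ.erase u).erase v,
      (if (kel G u v).Adj v z then 1 else 0) = (if G.Adj u z ∧ G.Adj v z then 1 else 0) := by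
    intro z hz
    obtain ⟨hz1, hz2⟩ := mem_SS hz
    rw [if_congr (kel_adj_v huv hz1 hz2) rfl rfl]
  rw [Finset.sum_congr rfl hS]
  have h1 : ¬ (kel G u v).Adj v u := fun h => kel_not_adj_uv huv h.symm
  have h2 : ¬ (kel G u v).Adj v v := (kel G u v).loopless.irrefl v
  have h3 : ¬ (G.Adj u u ∧ G.Adj v u) := fun h => G.loopless.irrefl u h.1
  have h4 : ¬ (G.Adj u v ∧ G.Adj v v) := fun h => G.loopless.irrefl v h.2
  simp [h1, h2, h3, h4]

include huv hnadj in
lemma deg_kel_u : (kel G u v).degree u + commCard G u v = G.degree u + G.degree v := by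
  rw [degree_eq_sum, degree_eq_sum, degree_eq_sum, commCard_eq_sum]
  rw [sum_split u v huv, sum_split u v huv, sum_split u v huv, sum_split u v huv]
  have hcombine : (∑ z ∈ (univ.erase u).erase v, (if (kel G u v).Adj u z then 1 else 0)) +
      (∑ z ∈ (univ.erase u).erase v, (if G.Adj u z ∧ G.Adj v z then 1 else 0)) =
      (∑ z ∈ (univ.erase u).erase v, (if G.Adj u z then 1 else 0)) +
      (∑ z ∈ (univ.erase u).erase v, (if G.Adj v z then 1 else 0)) := by
    rw [← Finset.sum_add_distrib, ← Finset.sum_add_distrib]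
    refine Finset.sum_congr rfl fun z hz => ?_
    obtain ⟨hz1, hz2⟩ := mem_SS hz
    rw [if_congr (kel_adj_u huv hz1 hz2) rfl rfl]
    by_cases h1 : G.Adj u z <;> by_cases h2 : G.Adj v z <;> simp [h1, h2]
  have e1 : ¬ (kel G u v).Adj u u := (kel G u v).loopless.irrefl u
  have e2 : ¬ (kel G u v).Adj u v := kel_not_adj_uv huv
  have e3 : ¬ (G.Adj u u ∧ G.Adj v u) := fun h => G.loopless.irrefl u h.1
  have e4 : ¬ (G.Adj u v ∧ G.Adj v v) := fun h => G.loopless.irrefl v h.2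
  have e5 : ¬ G.Adj u u := G.loopless.irrefl u
  have e6 : ¬ G.Adj v v := G.loopless.irrefl v
  have e7 : ¬ G.Adj v u := fun h => hnadj h.symm
  rw [if_neg e1, if_neg e2, if_neg e3, if_neg e4, if_neg e5, if_neg e6, if_neg e7, if_neg hnadj]
  omega

include huv hnadj in
lemma kel_card_edges : (kel G u v).edgeFinset.card = G.edgeFinset.card := by
  have hsum : ∑ w, (kel G u v).degree w = ∑ w, G.degree w := by
    rw [sum_split u v huv, sum_split u v huv]
    have hS : ∀ w ∈ (univ.erase u).erase v, (kel G u v).degree w = G.degree w := by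
      intro w hw
      obtain ⟨hw1, hw2⟩ := mem_SS hw
      exact deg_kel_other huv hnadj hw1 hw2
    rw [Finset.sum_congr rfl hS]
    have := deg_kel_u huv hnadj
    have := deg_kel_v huv hnadj
    omega
  have h1 := SimpleGraph.sum_degrees_eq_twice_card_edges (kel G u v)
  have h2 := SimpleGraph.sum_degrees_eq_twice_card_edges G
  omega

include huv hnadj in
lemma kel_connected (hconn : G.Connected) {c0 : V} (hc0u : G.Adj u c0) (hc0v : G.Adj v c0) :
    (kel G u v).Connected := by
  have hc0ne : c0 ≠ u ∧ c0 ≠ v := ⟨fun h => G.loopless.irrefl u (h ▸ hc0u), fun h => G.loopless.irrefl v (h ▸ hc0v)⟩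
  have hreach_v : (kel G u v).Reachable u v := by
    have h1 : (kel G u v).Adj u c0 := (kel_adj_u huv hc0ne.1 hc0ne.2).mpr (Or.inl hc0u)
    have h2 : (kel G u v).Adj c0 v := ((kel_adj_v huv hc0ne.1 hc0ne.2).mpr ⟨hc0u, hc0v⟩).symm
    exact (SimpleGraph.Adj.reachable h1).trans (SimpleGraph.Adj.reachable h2)
  have hstep : ∀ a b : V, G.Adj a b → (kel G u v).Reachable u a → (kel G u v).Reachable u b := by
    intro a b hab hra
    by_cases hbu : b = u
    · subst hbu; exact SimpleGraph.Reachable.refl _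
    by_cases hbv : b = v
    · subst hbv; exact hreach_v
    by_cases hau : a = u
    · subst hau
      exact SimpleGraph.Adj.reachable ((kel_adj_u huv hbu hbv).mpr (Or.inl hab))
    by_cases hav : a = v
    · subst hav
      exact SimpleGraph.Adj.reachable ((kel_adj_u huv hbu hbv).mpr (Or.inr hab))
    · exact hra.trans (SimpleGraph.Adj.reachable ((kel_adj_other hau hav hbu hbv).mpr hab))
  have hwalk : ∀ (a b : V) (_ : G.Walk a b),
      (kel G u v).Reachable u a → (kel G u v).Reachable u b := by
    intro a b w
    induction w with
    | nil => exact id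
    | cons hpq _ ih => exact fun h => ih (hstep _ _ hpq h)
  have hreach : ∀ a : V, (kel G u v).Reachable u a := by
    intro a
    obtain ⟨w⟩ := hconn.preconnected u a
    exact hwalk u a w (SimpleGraph.Reachable.refl _)
  haveI : Nonempty V := hconn.nonempty
  exact SimpleGraph.Connected.mk fun a b => (hreach a).symm.trans (hreach b)

end GraphAux

noncomputable section QD
variable {V : Type*} [Fintype V] [DecidableEq V]
set_option maxHeartbeats 800000



variable {V : Type*} [Fintype V] [DecidableEq V]




lemma qf_sub (A B : Matrix V V ℝ) (x : V → ℝ) (u v : V) (huv : u ≠ v)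
    (hsymA : ∀ i j, A i j = A j i) (hsymB : ∀ i j, B i j = B j i)
    (hS : ∀ i j, i ≠ u → i ≠ v → j ≠ u → j ≠ v → B i j = A i j)
    (huu : B u u = A u u) (hvv : B v v = A v v) (huv2 : B u v = A u v) :
    qf B x - qf A x =
      2 * ∑ w ∈ (univ.erase u).erase v,
        ((B u w - A u w) * x u + (B v w - A v w) * x v) * x w := by
  set D : Matrix V V ℝ := fun i j => B i j - A i j with hD
  have hDs : ∀ i j, D i j = D j i := fun i j => by rw [hD]; simp [hsymA i j, hsymB i j]
  have hDuu : D u u = 0 := by rw [hD]; simp [huu]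
  have hDvv : D v v = 0 := by rw [hD]; simp [hvv]
  have hDuv : D u v = 0 := by rw [hD]; simp [huv2]
  have hDvu : D v u = 0 := by rw [hDs v u, hDuv]
  have hDS : ∀ i j, i ≠ u → i ≠ v → j ≠ u → j ≠ v → D i j = 0 := by
    intro i j h1 h2 h3 h4; rw [hD]; simp [hS i j h1 h2 h3 h4]
  have h0 : qf B x - qf A x = ∑ i, ∑ j, D i j * x i * x j := by
    unfold qf
    rw [← Finset.sum_sub_distrib]
    refine Finset.sum_congr rfl fun i _ => ?_
    rw [← Finset.sum_sub_distrib]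
    refine Finset.sum_congr rfl fun j _ => ?_
    rw [hD]; ring
  rw [h0]
  rw [sum_split u v huv]
  have hu_inner : ∑ j, D u j * x u * x j
      = ∑ w ∈ (univ.erase u).erase v, D u w * x u * x w := by
    rw [sum_split u v huv, hDuu, hDuv]; ring
  have hv_inner : ∑ j, D v j * x v * x j
      = ∑ w ∈ (univ.erase u).erase v, D v w * x v * x w := by
    rw [sum_split u v huv, hDvu, hDvv]; ring
  have hS_inner : ∀ i ∈ (univ.erase u).erase v,
      ∑ j, D i j * x i * x j = D u i * x u * x i + D v i * x v * x i := by
    intro i hi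
    obtain ⟨hi1, hi2⟩ := mem_SS hi
    rw [sum_split u v huv]
    have hz : ∑ j ∈ (univ.erase u).erase v, D i j * x i * x j = 0 := by
      apply Finset.sum_eq_zero
      intro j hj
      obtain ⟨hj1, hj2⟩ := mem_SS hj
      rw [hDS i j hi1 hi2 hj1 hj2]; ring
    rw [hz, hDs i u, hDs i v]; ring
  rw [hu_inner, hv_inner, Finset.sum_congr rfl hS_inner]
  rw [Finset.mul_sum, ← Finset.sum_add_distrib, ← Finset.sum_add_distrib]
  refine Finset.sum_congr rfl fun w hw => ?_
  rw [hD]; ring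
end QD

section Key

lemma convex_pair {g : ℝ → ℝ} (hg : ConvexOn ℝ Set.univ g) {a b s t : ℝ}
    (hsum : s + t = a + b) (has : a ≤ s) (hta : t ≤ a) (htb : t ≤ b) :
    g a + g b ≤ g s + g t := by
  rcases eq_or_lt_of_le (hta.trans has) with h | h
  · have ha : a = s := by
      have : s ≤ a := h ▸ hta
      linarith
    have hb : b = t := by linarith
    rw [ha, hb]
  · set θ := (a - t) / (s - t) with hθ
    have hst : 0 < s - t := by linarith
    have hθ0 : 0 ≤ θ := div_nonneg (by linarith) (le_of_lt hst)
    have hθ1 : θ ≤ 1 := by rw [hθ, div_le_one hst]; linarith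
    have h1θ : 0 ≤ 1 - θ := by linarith
    have ha' : θ * s + (1 - θ) * t = a := by
      rw [hθ]; field_simp; ring
    have hb' : (1 - θ) * s + θ * t = b := by
      have h2 : (1 - θ) * s + θ * t = s + t - (θ * s + (1 - θ) * t) := by ring
      rw [h2, ha']; linarith
    have c1 := hg.2 (Set.mem_univ s) (Set.mem_univ t) hθ0 h1θ (by ring)
    have c2 := hg.2 (Set.mem_univ s) (Set.mem_univ t) h1θ hθ0 (by ring)
    simp only [smul_eq_mul] at c1 c2
    rw [ha'] at c1
    rw [hb'] at c2
    linarith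

variable {V : Type*} [Fintype V] [DecidableEq V]

lemma key [Nonempty V]
    (f : ℝ → ℝ → ℝ)
    (hpos : ∀ x y : ℝ, 0 < x → 0 < y → 0 < f x y)
    (hsymm : ∀ x y : ℝ, f x y = f y x)
    (hmono : ∀ y : ℝ, Monotone fun x => f x y)
    (hconv : ∀ y : ℝ, ConvexOn ℝ Set.univ fun x => f x y)
    (G : SimpleGraph V)
    (hdegpos : ∀ w, 0 < G.degree w)
    {u v c0 w0 : V}
    (huv : u ≠ v) (hnadj : ¬ G.Adj u v)
    (hc0u : G.Adj u c0) (hc0v : G.Adj v c0)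
    (hw0v : G.Adj v w0) (hw0u : ¬ G.Adj u w0)
    (x : V → ℝ) (hx0 : ∀ i, 0 < x i) (hxunit : ∑ i, x i ^ 2 = 1)
    (hxmax : ∀ y : V → ℝ, ∑ i, y i ^ 2 = 1 → qf (fAdj G f) y ≤ qf (fAdj G f) x)
    (heig : fAdj G f *ᵥ x = qf (fAdj G f) x • x)
    (hxuv : x v ≤ x u)
    (hle : specRad (fAdj (kel G u v) f) ≤ specRad (fAdj G f)) : False := by
  set A := fAdj G f with hAdef
  set B := fAdj (kel G u v) f with hBdef
  set lam := qf A x with hlamdef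
  have hw0nu : w0 ≠ u := fun h => hnadj ((h ▸ hw0v).symm)
  have hw0nv : w0 ≠ v := fun h => G.loopless.irrefl v (h ▸ hw0v)
  -- degrees
  have hkCu : commCard G u v ≤ G.degree u := commCard_le_degu
  have hkCv : commCard G u v ≤ G.degree v := commCard_le_degv
  have hdegBu : (kel G u v).degree u + commCard G u v = G.degree u + G.degree v :=
    deg_kel_u huv hnadj
  have hdegBv : (kel G u v).degree v = commCard G u v := deg_kel_v huv hnadj
  have hdegBother : ∀ w, w ≠ u → w ≠ v → (kel G u v).degree w = G.degree w :=
    fun w h h' => deg_kel_other huv hnadj h h'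
  have hkpos : 0 < commCard G u v := Finset.card_pos.mpr
    ⟨c0, Finset.mem_filter.mpr ⟨Finset.mem_univ _, hc0u, hc0v⟩⟩
  have hdegposB : ∀ w, 0 < (kel G u v).degree w := by
    intro w
    by_cases h1 : w = u
    · subst h1
      have := hdegpos w
      omega
    by_cases h2 : w = v
    · subst h2; rw [hdegBv]; exact hkpos
    · rw [hdegBother w h1 h2]; exact hdegpos w
  -- entries
  have hAapp : ∀ i j, A i j = if G.Adj i j then f (G.degree i) (G.degree j) else 0 :=
    fun i j => rfl
  have hBapp : ∀ i j, B i j =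
      if (kel G u v).Adj i j then f ((kel G u v).degree i) ((kel G u v).degree j) else 0 :=
    fun i j => rfl
  have hcastpos : ∀ m : ℕ, 0 < m → (0 : ℝ) < m := fun m h => by exact_mod_cast h
  have hApos : ∀ i j, G.Adj i j → 0 < A i j := by
    intro i j hij
    rw [hAapp, if_pos hij]
    exact hpos _ _ (hcastpos _ (hdegpos i)) (hcastpos _ (hdegpos j))
  have hBpos : ∀ i j, (kel G u v).Adj i j → 0 < B i j := by
    intro i j hij
    rw [hBapp, if_pos hij]
    exact hpos _ _ (hcastpos _ (hdegposB i)) (hcastpos _ (hdegposB j))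
  have hnnA : ∀ i j, 0 ≤ A i j := by
    intro i j
    by_cases h : G.Adj i j
    · exact le_of_lt (hApos i j h)
    · rw [hAapp, if_neg h]
  have hnnB : ∀ i j, 0 ≤ B i j := by
    intro i j
    by_cases h : (kel G u v).Adj i j
    · exact le_of_lt (hBpos i j h)
    · rw [hBapp, if_neg h]
  have hsymA : ∀ i j, A i j = A j i := by
    intro i j
    rw [hAapp, hAapp]
    by_cases h : G.Adj i j
    · rw [if_pos h, if_pos h.symm, hsymm]
    · rw [if_neg h, if_neg fun hh => h hh.symm]
  have hsymB : ∀ i j, B i j = B j i := by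
    intro i j
    rw [hBapp, hBapp]
    by_cases h : (kel G u v).Adj i j
    · rw [if_pos h, if_pos h.symm, hsymm]
    · rw [if_neg h, if_neg fun hh => h hh.symm]
  -- real degree abbreviations
  set du : ℝ := (G.degree u : ℝ) with hdu
  set dv : ℝ := (G.degree v : ℝ) with hdv
  set rk : ℝ := (commCard G u v : ℝ) with hrk
  have hdBu : ((kel G u v).degree u : ℝ) = du + dv - rk := by
    have h : ((kel G u v).degree u : ℝ) + rk = du + dv := by
      rw [hdu, hdv, hrk]
      exact_mod_cast hdegBu
    linarith
  have hdBv : ((kel G u v).degree v : ℝ) = rk := by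
    rw [hdegBv]
  have hrk_du : rk ≤ du := by rw [hdu, hrk]; exact_mod_cast hkCu
  have hrk_dv : rk ≤ dv := by rw [hdv, hrk]; exact_mod_cast hkCv
  have hdupos : 0 < du := hcastpos _ (hdegpos u)
  have hdvpos : 0 < dv := hcastpos _ (hdegpos v)
  have hrkpos : 0 < rk := hcastpos _ hkpos
  have hdBupos : 0 < du + dv - rk := by linarith
  -- lam nonneg, specRad A ≤ lam
  have hnnq : 0 ≤ lam := by
    rw [hlamdef]
    unfold qf
    refine Finset.sum_nonneg fun i _ => Finset.sum_nonneg fun j _ => ?_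
    exact mul_nonneg (mul_nonneg (hnnA i j) (le_of_lt (hx0 i))) (le_of_lt (hx0 j))
  have hspecA : specRad A ≤ lam := specRad_le_of_max hnnA hnnq hxmax
  -- CORE: lam ≤ qf B x
  have hSagree : ∀ i j, i ≠ u → i ≠ v → j ≠ u → j ≠ v → B i j = A i j := by
    intro i j h1 h2 h3 h4
    rw [hAapp, hBapp, if_congr (kel_adj_other h1 h2 h3 h4) rfl rfl]
    by_cases h : G.Adj i j
    · rw [if_pos h, if_pos h, hdegBother i h1 h2, hdegBother j h3 h4]
    · rw [if_neg h, if_neg h]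
  have huuBA : B u u = A u u := by
    rw [hAapp, hBapp, if_neg ((kel G u v).loopless.irrefl u), if_neg (G.loopless.irrefl u)]
  have hvvBA : B v v = A v v := by
    rw [hAapp, hBapp, if_neg ((kel G u v).loopless.irrefl v), if_neg (G.loopless.irrefl v)]
  have huvBA : B u v = A u v := by
    rw [hAapp, hBapp, if_neg (kel_not_adj_uv huv), if_neg hnadj]
  have hdiff := qf_sub A B x u v huv hsymA hsymB hSagree huuBA hvvBA huvBA
  have hterm : ∀ w ∈ (univ.erase u).erase v,
      0 ≤ ((B u w - A u w) * x u + (B v w - A v w) * x v) * x w := by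
    intro w hw
    obtain ⟨hw1, hw2⟩ := mem_SS hw
    have hdw : ((kel G u v).degree w : ℝ) = (G.degree w : ℝ) := by
      rw [hdegBother w hw1 hw2]
    set dw : ℝ := (G.degree w : ℝ) with hdwdef
    have hdwpos : 0 < dw := hcastpos _ (hdegpos w)
    have hBuw : B u w = if (G.Adj u w ∨ G.Adj v w) then f (du + dv - rk) dw else 0 := by
      rw [hBapp, if_congr (kel_adj_u huv hw1 hw2) rfl rfl, hdBu, hdw]
    have hBvw : B v w = if (G.Adj u w ∧ G.Adj v w) then f rk dw else 0 := by
      rw [hBapp, if_congr (kel_adj_v huv hw1 hw2) rfl rfl, hdBv, hdw]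
    have hAuw : A u w = if G.Adj u w then f du dw else 0 := hAapp u w
    have hAvw : A v w = if G.Adj v w then f dv dw else 0 := hAapp v w
    have hxw := le_of_lt (hx0 w)
    have hxu := le_of_lt (hx0 u)
    have hxv := le_of_lt (hx0 v)
    by_cases h1 : G.Adj u w <;> by_cases h2 : G.Adj v w
    · -- both
      have e01 : G.Adj u w ∨ G.Adj v w := Or.inl h1
      have e02 : G.Adj u w ∧ G.Adj v w := And.intro h1 h2
      rw [hBuw, hBvw, hAuw, hAvw, if_pos e01, if_pos e02, if_pos h1, if_pos h2]
      have hcp : f du dw + f dv dw ≤ f (du + dv - rk) dw + f rk dw :=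
        convex_pair (hconv dw) (by ring) (by linarith) hrk_du hrk_dv
      have hm1 : f rk dw ≤ f dv dw := hmono dw hrk_dv
      have e1 : 0 ≤ f dv dw - f rk dw := by linarith
      have e2 : f dv dw - f rk dw ≤ f (du + dv - rk) dw - f du dw := by linarith
      have e3 : (f dv dw - f rk dw) * x u ≤ (f (du + dv - rk) dw - f du dw) * x u :=
        mul_le_mul_of_nonneg_right e2 hxu
      have e4 : (f dv dw - f rk dw) * x v ≤ (f dv dw - f rk dw) * x u :=
        mul_le_mul_of_nonneg_left hxuv e1
      apply mul_nonneg _ hxw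
      nlinarith
    · -- u only
      have e01 : G.Adj u w ∨ G.Adj v w := Or.inl h1
      have e02 : ¬(G.Adj u w ∧ G.Adj v w) := fun hh => h2 hh.2
      rw [hBuw, hBvw, hAuw, hAvw, if_pos e01, if_neg e02, if_pos h1, if_neg h2]
      have : f du dw ≤ f (du + dv - rk) dw := hmono dw (by linarith)
      apply mul_nonneg _ hxw
      nlinarith
    · -- v only
      have e01 : G.Adj u w ∨ G.Adj v w := Or.inr h2
      have e02 : ¬(G.Adj u w ∧ G.Adj v w) := fun hh => h1 hh.1
      rw [hBuw, hBvw, hAuw, hAvw, if_pos e01, if_neg e02, if_neg h1, if_pos h2]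
      have hmm : f dv dw ≤ f (du + dv - rk) dw := hmono dw (by linarith)
      have hfpos : 0 ≤ f dv dw := le_of_lt (hpos _ _ hdvpos hdwpos)
      have := mul_le_mul hmm hxuv hxv (le_trans hfpos hmm)
      apply mul_nonneg _ hxw
      nlinarith
    · -- neither
      have e01 : ¬(G.Adj u w ∨ G.Adj v w) := fun hh => hh.elim h1 h2
      have e02 : ¬(G.Adj u w ∧ G.Adj v w) := fun hh => h1 hh.1
      rw [hBuw, hBvw, hAuw, hAvw, if_neg e01, if_neg e02, if_neg h1, if_neg h2]
      simp
  have hqB : lam ≤ qf B x := by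
    have hsumnn : 0 ≤ ∑ w ∈ (univ.erase u).erase v,
        ((B u w - A u w) * x u + (B v w - A v w) * x v) * x w :=
      Finset.sum_nonneg hterm
    rw [hlamdef]
    linarith [hdiff]
  -- transfer max to B
  obtain ⟨xB, hxB0, hxBunit, hxBmax, hxBeig⟩ := exists_max_eigen B hsymB hnnB
  have hxBne : xB ≠ 0 := by
    intro h
    rw [h] at hxBunit
    simp at hxBunit
  have hlow : qf B xB ≤ specRad B := le_specRad_of_eigen hxBne hxBeig
  have hxBlam : qf B xB ≤ lam := le_trans hlow (le_trans hle hspecA)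
  have hyb : ∀ y : V → ℝ, ∑ i, y i ^ 2 = 1 → qf B y ≤ qf B x := by
    intro y hy
    have h1 := hxBmax y hy
    linarith
  have hqBx : qf B x = lam := le_antisymm (le_trans (hxBmax x hxunit) hxBlam) hqB
  have heigB : B *ᵥ x = qf B x • x := eigen_of_max B hsymB x hxunit hyb
  rw [hqBx] at heigB
  -- coordinate v
  have hAv : ∑ j, A v j * x j = lam * x v := by
    have := congrFun heig v
    simpa [Matrix.mulVec, dotProduct] using this
  have hBv : ∑ j, B v j * x j = lam * x v := by
    have := congrFun heigB v
    simpa [Matrix.mulVec, dotProduct] using this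
  have hzero : ∑ j, (A v j - B v j) * x j = 0 := by
    have : ∑ j, (A v j - B v j) * x j = (∑ j, A v j * x j) - ∑ j, B v j * x j := by
      rw [← Finset.sum_sub_distrib]
      exact Finset.sum_congr rfl fun j _ => by ring
    rw [this, hAv, hBv, sub_self]
  rw [sum_split u v huv] at hzero
  have hAvu : A v u = 0 := by rw [hAapp, if_neg fun h => hnadj h.symm]
  have hBvu : B v u = 0 := by rw [hBapp, if_neg fun h => kel_not_adj_uv huv h.symm]
  have hAvv : A v v = 0 := by rw [hAapp, if_neg (G.loopless.irrefl v)]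
  have hBvv : B v v = 0 := by rw [hBapp, if_neg ((kel G u v).loopless.irrefl v)]
  rw [hAvu, hBvu, hAvv, hBvv] at hzero
  have hzero' : ∑ w ∈ (univ.erase u).erase v, (A v w - B v w) * x w = 0 := by linarith
  have hposum : 0 < ∑ w ∈ (univ.erase u).erase v, (A v w - B v w) * x w := by
    apply Finset.sum_pos'
    · intro w hw
      obtain ⟨hw1, hw2⟩ := mem_SS hw
      have hdw : ((kel G u v).degree w : ℝ) = (G.degree w : ℝ) := by
        rw [hdegBother w hw1 hw2]
      have hBvw : B v w = if (G.Adj u w ∧ G.Adj v w) then f rk ((G.degree w : ℝ)) else 0 := by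
        rw [hBapp, if_congr (kel_adj_v huv hw1 hw2) rfl rfl, hdBv, hdw]
      have hAvw : A v w = if G.Adj v w then f dv ((G.degree w : ℝ)) else 0 := hAapp v w
      apply mul_nonneg _ (le_of_lt (hx0 w))
      rw [hAvw, hBvw]
      by_cases h2 : G.Adj v w
      · rw [if_pos h2]
        by_cases h1 : G.Adj u w
        · have e02 : G.Adj u w ∧ G.Adj v w := And.intro h1 h2
          rw [if_pos e02]
          have : f rk (G.degree w : ℝ) ≤ f dv (G.degree w : ℝ) := hmono _ hrk_dv
          linarith
        · have e02 : ¬(G.Adj u w ∧ G.Adj v w) := fun hh => h1 hh.1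
          rw [if_neg e02]
          have := hpos dv (G.degree w : ℝ) hdvpos (hcastpos _ (hdegpos w))
          linarith
      · have e02 : ¬(G.Adj u w ∧ G.Adj v w) := fun hh => h2 hh.2
        rw [if_neg h2, if_neg e02]
        simp
    · refine ⟨w0, ?_, ?_⟩
      · exact Finset.mem_erase.mpr ⟨hw0nv, Finset.mem_erase.mpr ⟨hw0nu, Finset.mem_univ _⟩⟩
      · have hdw : ((kel G u v).degree w0 : ℝ) = (G.degree w0 : ℝ) := by
          rw [hdegBother w0 hw0nu hw0nv]
        have hBvw : B v w0 = 0 := by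
          have e02 : ¬(kel G u v).Adj v w0 := fun hh =>
            hw0u ((kel_adj_v huv hw0nu hw0nv).mp hh).1
          rw [hBapp, if_neg e02]
        have hAvw : A v w0 = if G.Adj v w0 then f dv ((G.degree w0 : ℝ)) else 0 := hAapp v w0
        rw [hBvw, hAvw, if_pos hw0v, sub_zero]
        exact mul_pos (hpos _ _ hdvpos (hcastpos _ (hdegpos w0))) (hx0 w0)
  exact absurd hzero' (ne_of_gt hposum)

end Key

/-- `G` has the largest `f`-spectral radius among connected graphs of order `n` and
cyclomatic number `c ≥ 0`; then `G` contains no induced path on 5 vertices. -/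
theorem stmt_14 (n c : ℕ)
    (f : ℝ → ℝ → ℝ)
    (hpos : ∀ x y : ℝ, 0 < x → 0 < y → 0 < f x y)
    (hsymm : ∀ x y : ℝ, f x y = f y x)
    (hmono : ∀ y : ℝ, Monotone fun x => f x y)
    (hconv : ∀ y : ℝ, ConvexOn ℝ Set.univ fun x => f x y)
    (G : SimpleGraph (Fin n)) (hconn : G.Connected)
    (hcyc : G.edgeFinset.card + 1 = n + c)
    (hmax : ∀ H : SimpleGraph (Fin n), H.Connected → H.edgeFinset.card + 1 = n + c →
      specRad (fAdj H f) ≤ specRad (fAdj G f)) :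
    ¬∃ φ : Fin 5 ↪ Fin n, ∀ i j : Fin 5,
      G.Adj (φ i) (φ j) ↔ (SimpleGraph.pathGraph 5).Adj i j := by
  rintro ⟨φ, hφ⟩
  haveI : Nonempty (Fin n) := ⟨φ 0⟩
  set p0 := φ 0 with hp0
  set p1 := φ 1 with hp1
  set p2 := φ 2 with hp2
  set p3 := φ 3 with hp3
  set p4 := φ 4 with hp4
  -- adjacency facts
  have hadj : ∀ i j : Fin 5, (i.val + 1 = j.val ∨ j.val + 1 = i.val) → G.Adj (φ i) (φ j) := by
    intro i j h
    exact (hφ i j).mpr (SimpleGraph.pathGraph_adj.mpr h)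
  have hnadj : ∀ i j : Fin 5, ¬(i.val + 1 = j.val ∨ j.val + 1 = i.val) → ¬G.Adj (φ i) (φ j) := by
    intro i j h hAdj
    exact h (SimpleGraph.pathGraph_adj.mp ((hφ i j).mp hAdj))
  have h01 : G.Adj p0 p1 := hadj 0 1 (by decide)
  have h12 : G.Adj p1 p2 := hadj 1 2 (by decide)
  have h23 : G.Adj p2 p3 := hadj 2 3 (by decide)
  have h34 : G.Adj p3 p4 := hadj 3 4 (by decide)
  have h13 : ¬G.Adj p1 p3 := hnadj 1 3 (by decide)
  have h14 : ¬G.Adj p1 p4 := hnadj 1 4 (by decide)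
  have h03 : ¬G.Adj p0 p3 := hnadj 0 3 (by decide)
  have hne13 : p1 ≠ p3 := by
    intro h
    have := φ.injective h
    exact absurd this (by decide)
  -- positive degrees
  have hdegpos : ∀ w : Fin n, 0 < G.degree w := by
    intro w
    rw [G.degree_pos_iff_exists_adj w]
    have hne01 : p0 ≠ p1 := fun h => G.loopless.irrefl p1 (h ▸ h01)
    have hzne : ∃ z : Fin n, z ≠ w := by
      by_cases h : w = p0
      · exact ⟨p1, by rw [h]; exact fun hh => hne01 hh.symm⟩
      · exact ⟨p0, fun hh => h hh.symm⟩
    obtain ⟨z, hz⟩ := hzne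
    obtain ⟨p⟩ := hconn.preconnected w z
    cases p with
    | nil => exact absurd rfl hz
    | cons h q => exact ⟨_, h⟩
  -- maximizer eigenvector for A
  set A := fAdj G f with hAdef
  have hAapp : ∀ i j, A i j = if G.Adj i j then f (G.degree i) (G.degree j) else 0 :=
    fun i j => rfl
  have hcastpos : ∀ m : ℕ, 0 < m → (0 : ℝ) < m := fun m h => by exact_mod_cast h
  have hApos : ∀ i j, G.Adj i j → 0 < A i j := by
    intro i j hij
    rw [hAapp, if_pos hij]
    exact hpos _ _ (hcastpos _ (hdegpos i)) (hcastpos _ (hdegpos j))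
  have hnnA : ∀ i j, 0 ≤ A i j := by
    intro i j
    by_cases h : G.Adj i j
    · exact le_of_lt (hApos i j h)
    · rw [hAapp, if_neg h]
  have hsymA : ∀ i j, A i j = A j i := by
    intro i j
    rw [hAapp, hAapp]
    by_cases h : G.Adj i j
    · rw [if_pos h, if_pos h.symm, hsymm]
    · rw [if_neg h, if_neg fun hh => h hh.symm]
  obtain ⟨x, hx0, hxunit, hxmax, heig⟩ := exists_max_eigen A hsymA hnnA
  set lam := qf A x with hlamdef
  have hrow : ∀ b, ∑ k, A b k * x k = lam * x b := by
    intro b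
    have := congrFun heig b
    simpa [Matrix.mulVec, dotProduct] using this
  -- lam > 0
  have hxsome : ∃ i, 0 < x i := by
    by_contra h
    push_neg at h
    have hzz : ∀ i, x i = 0 := fun i => le_antisymm (h i) (hx0 i)
    rw [show ∑ i, x i ^ 2 = 0 from Finset.sum_eq_zero fun i _ => by rw [hzz i]; ring] at hxunit
    norm_num at hxunit
  obtain ⟨i0, hi0⟩ := hxsome
  have hlampos : 0 < lam := by
    obtain ⟨j0, hj0⟩ := (G.degree_pos_iff_exists_adj i0).mp (hdegpos i0)
    have hsingle : A j0 i0 * x i0 ≤ ∑ k, A j0 k * x k :=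
      Finset.single_le_sum (fun k _ => mul_nonneg (hnnA j0 k) (hx0 k)) (Finset.mem_univ i0)
    have hposl : 0 < A j0 i0 * x i0 := mul_pos (hApos j0 i0 hj0.symm) hi0
    have h1 : 0 < lam * x j0 := by rw [← hrow j0]; linarith
    by_contra h
    push_neg at h
    nlinarith [hx0 j0]
  -- Perron positivity
  have hstep : ∀ a b, G.Adj a b → 0 < x a → 0 < x b := by
    intro a b hab ha
    have hsingle : A b a * x a ≤ ∑ k, A b k * x k :=
      Finset.single_le_sum (fun k _ => mul_nonneg (hnnA b k) (hx0 k)) (Finset.mem_univ a)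
    have h1 : 0 < lam * x b := by
      rw [← hrow b]
      have := mul_pos (hApos b a hab.symm) ha
      linarith
    nlinarith [hx0 b]
  have hxpos : ∀ w, 0 < x w := by
    have hwalk : ∀ (a b : Fin n) (_ : G.Walk a b), 0 < x a → 0 < x b := by
      intro a b w
      induction w with
      | nil => exact id
      | cons hpq _ ih => exact fun h => ih (hstep _ _ hpq h)
    intro w
    obtain ⟨p⟩ := hconn.preconnected i0 w
    exact hwalk i0 w p hi0
  -- apply key in the right orientation
  rcases le_total (x p3) (x p1) with hc | hc
  · -- u = p1, v = p3, c0 = p2, w0 = p4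
    have hkconn := kel_connected hne13 h13 hconn h12 (h23.symm)
    have hkcount : (kel G p1 p3).edgeFinset.card + 1 = n + c := by
      rw [kel_card_edges hne13 h13]
      exact hcyc
    have hle := hmax (kel G p1 p3) hkconn hkcount
    exact key f hpos hsymm hmono hconv G hdegpos hne13 h13 h12 (h23.symm) h34 h14
      x hxpos hxunit hxmax heig hc hle
  · -- u = p3, v = p1, c0 = p2, w0 = p0
    have hne31 : p3 ≠ p1 := hne13.symm
    have h31 : ¬G.Adj p3 p1 := fun h => h13 h.symm
    have hkconn := kel_connected hne31 h31 hconn (h23.symm) h12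
    have hkcount : (kel G p3 p1).edgeFinset.card + 1 = n + c := by
      rw [kel_card_edges hne31 h31]
      exact hcyc
    have hle := hmax (kel G p3 p1) hkconn hkcount
    exact key f hpos hsymm hmono hconv G hdegpos hne31 h31 (h23.symm) h12 (h01.symm)
      (fun h => h03 h.symm) x hxpos hxunit hxmax heig hc hle
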